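/- If (x_h,w_h) converges to (x,w) in H, all the paths γ_h := γ_{x_h,w_h} and γ := γ_{x,w} have image contained in U, then the Nemitsky operators converge: ∂L/∂q(·, γ_h(·), w_h(·)) → ∂L/∂q(·, γ(·), w(·)) in L¹([0,1],ℝ^n) and ∂L/∂v(·, γ_h(·), w_h(·)) → ∂L/∂v(·, γ(·), w(·)) in L²([0,1],ℝ^n). -/

import Mathlib

open MeasureTheory Set Filter Topology ContDiff
open scoped RealInnerProductSpace

noncomputable section

/-- Euclidean space `ℝ^n`. -/
abbrev E (n : ℕ) : Type := EuclideanSpace ℝ (Fin n)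

/-- Lebesgue measure restricted to the interval `[0,1]`. -/
abbrev μ01 : Measure ℝ := volume.restrict (Set.Icc (0:ℝ) 1)

instance : IsFiniteMeasure μ01 :=
  ⟨by rw [Measure.restrict_apply_univ]; simp [Real.volume_Icc]⟩

/-- The Hilbert space `H = ℝ^n × L²([0,1],ℝ^n)`, the standard model of `H¹([0,1],ℝ^n)`
via `u ↦ (u 0, u')`. -/
abbrev Hsp (n : ℕ) : Type := E n × Lp (E n) 2 μ01

variable {n : ℕ}

/-- The absolutely continuous path associated to `(x,w) ∈ H`:  `t ↦ x + ∫_0^t w(s) ds`. -/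
def pathH (p : Hsp n) : ℝ → E n :=
  fun t => p.1 + ∫ s in Set.Ioc (0:ℝ) t, p.2 s ∂μ01

/-- The open set `𝒪 ⊆ H` of those `(x,w)` whose path stays in `U`. -/
def actO (U : Set (E n)) : Set (Hsp n) :=
  {p | ∀ t ∈ Set.Icc (0:ℝ) 1, pathH p t ∈ U}

/-- The Lagrangian action functional `S_L`. -/
def action (L : ℝ → E n → E n → ℝ) (p : Hsp n) : ℝ :=
  ∫ t, L t (pathH p t) (p.2 t) ∂μ01

/-- The first differential of the action functional:
`DS_L(p)[ξ] = ∫_0^1 ( ∂L/∂q · ξ + ∂L/∂v · ξ' ) dt`. -/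
def dAct (Lq Lv : ℝ → E n → E n → E n) (p ξ : Hsp n) : ℝ :=
  ∫ t, (⟪Lq t (pathH p t) (p.2 t), pathH ξ t⟫ + ⟪Lv t (pathH p t) (p.2 t), ξ.2 t⟫) ∂μ01

/-- The second Gateaux differential of the action functional:
`d²S_L(p)[ξ,η] = ∫_0^1 ( ∂²L/∂v² ξ'·η' + ∂²L/∂v∂q ξ'·η + ∂²L/∂q∂v ξ·η' + ∂²L/∂q² ξ·η ) dt`. -/
def d2Act (Lvv Lqv Lqq : ℝ → E n → E n → (E n →L[ℝ] E n)) (p ξ η : Hsp n) : ℝ :=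
  ∫ t, (⟪Lvv t (pathH p t) (p.2 t) (ξ.2 t), η.2 t⟫
      + ⟪Lqv t (pathH p t) (p.2 t) (pathH ξ t), η.2 t⟫
      + ⟪Lqv t (pathH p t) (p.2 t) (pathH η t), ξ.2 t⟫
      + ⟪Lqq t (pathH p t) (p.2 t) (pathH ξ t), pathH η t⟫) ∂μ01

/-- The `H`-inner product `⟨(x,w),(y,z)⟩ = x·y + ⟨w,z⟩_{L²}`. -/
def innH (p q : Hsp n) : ℝ := ⟪p.1, q.1⟫ + ⟪p.2, q.2⟫

lemma pathH_add (p q : Hsp n) (t : ℝ) (_ht : t ∈ Set.Icc (0:ℝ) 1) :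
    pathH (p + q) t = pathH p t + pathH q t := by
  have hint : ∀ r : Hsp n, Integrable (r.2 : ℝ → E n) (μ01.restrict (Set.Ioc (0:ℝ) t)) :=
    fun r => ((Lp.memLp r.2).integrable (by norm_num)).restrict
  have h1 : (((p + q).2 : Lp (E n) 2 μ01) : ℝ → E n)
      =ᵐ[μ01.restrict (Set.Ioc (0:ℝ) t)] fun s => p.2 s + q.2 s :=
    ae_restrict_of_ae (Lp.coeFn_add p.2 q.2)
  have h2 : ∫ s in Set.Ioc (0:ℝ) t, (p + q).2 s ∂μ01
      = (∫ s in Set.Ioc (0:ℝ) t, p.2 s ∂μ01) + ∫ s in Set.Ioc (0:ℝ) t, q.2 s ∂μ01 := by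
    rw [integral_congr_ae h1]
    exact integral_add (hint p) (hint q)
  simp only [pathH, Prod.fst_add, h2]
  abel

lemma pathH_smul (c : ℝ) (p : Hsp n) (t : ℝ) (_ht : t ∈ Set.Icc (0:ℝ) 1) :
    pathH (c • p) t = c • pathH p t := by
  have h1 : (((c • p).2 : Lp (E n) 2 μ01) : ℝ → E n)
      =ᵐ[μ01.restrict (Set.Ioc (0:ℝ) t)] fun s => c • (p.2 s) :=
    ae_restrict_of_ae (Lp.coeFn_smul c p.2)
  have h2 : ∫ s in Set.Ioc (0:ℝ) t, (c • p).2 s ∂μ01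
      = c • ∫ s in Set.Ioc (0:ℝ) t, p.2 s ∂μ01 := by
    rw [integral_congr_ae h1]
    exact integral_smul c _
  simp only [pathH, Prod.smul_fst, h2, smul_add]

lemma pathH_zero (t : ℝ) (_ht : t ∈ Set.Icc (0:ℝ) 1) : pathH (0 : Hsp n) t = 0 := by
  have h1 : (((0 : Hsp n).2 : Lp (E n) 2 μ01) : ℝ → E n)
      =ᵐ[μ01.restrict (Set.Ioc (0:ℝ) t)] fun _ => (0 : E n) :=
    ae_restrict_of_ae (Lp.coeFn_zero (E n) 2 μ01)
  simp only [pathH]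
  rw [integral_congr_ae h1]
  simp

/-- The closed subspace `H_W = {(x,w) : (γ(0),γ(1)) ∈ W}` of `H`. -/
def HWsub (W : Submodule ℝ (E n × E n)) : Submodule ℝ (Hsp n) where
  carrier := {p | (pathH p 0, pathH p 1) ∈ W}
  add_mem' := by
    intro p q hp hq
    simp only [Set.mem_setOf_eq] at *
    rw [pathH_add p q 0 (by norm_num), pathH_add p q 1 (by norm_num)]
    exact W.add_mem hp hq
  zero_mem' := by
    simp only [Set.mem_setOf_eq]
    rw [pathH_zero 0 (by norm_num), pathH_zero 1 (by norm_num)]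
    exact W.zero_mem
  smul_mem' := by
    intro c p hp
    simp only [Set.mem_setOf_eq] at *
    rw [pathH_smul c p 0 (by norm_num), pathH_smul c p 1 (by norm_num)]
    exact W.smul_mem c hp

/-- The auxiliary inner product `⟨ξ,η⟩₀ = ∫ ∂²L/∂v²(t,0,0) ξ'·η' dt + ∫ ξ·η dt` on `H_W`. -/
def inn0 (Lvv : ℝ → E n → E n → (E n →L[ℝ] E n)) (ξ η : Hsp n) : ℝ :=
  (∫ t, ⟪Lvv t 0 0 (ξ.2 t), η.2 t⟫ ∂μ01) + ∫ t, ⟪pathH ξ t, pathH η t⟫ ∂μ01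

end

/-!
On the probability space `[0,1]` the `L¹` norm is dominated by the `L²` norm, so paths depend
uniformly and Lipschitz-continuously on their data: `|γ_r(t) - γ_p(t)| ≤ 2‖r - p‖`. The image of
`γ_p` is compact in `U`, hence a whole tube of some radius `ε` around it lies in `U`, and for `r`
near `p` the mean value inequality applies along segments inside `U`. Splitting each difference
into a change of `q` (weighted by `∂²L/∂q²`, resp. `∂²L/∂q∂v`) and a change of `v` (weighted by
`∂²L/∂v∂q`, resp. `∂²L/∂v²`), the growth bounds (L1') dominate the integrands by expressions in
`|w_r|`, `|w_p|` and `|w_r - w_p|`. By Cauchy–Schwarz their integrals are bounded by a continuous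
function of `r` that vanishes at `r = p`.
-/

instance isProbabilityMeasure_μ01 : IsProbabilityMeasure μ01 :=
  ⟨by simp [Real.volume_Icc]⟩

namespace MeasureTheory.Lp

variable {α F : Type*} [MeasurableSpace α] {μ : Measure α} [NormedAddCommGroup F]

lemma norm_eq_sqrt_integral_norm_sq (f : Lp F 2 μ) : ‖f‖ = √(∫ a, ‖f a‖ ^ 2 ∂μ) := by
  rw [norm_def, toReal_eLpNorm (Lp.aestronglyMeasurable f),
    lpNorm_eq_integral_norm_rpow_toReal two_ne_zero ENNReal.ofNat_ne_top
      (Lp.aestronglyMeasurable f), Real.sqrt_eq_rpow]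
  norm_num

lemma integral_norm_sq (f : Lp F 2 μ) : ∫ a, ‖f a‖ ^ 2 ∂μ = ‖f‖ ^ 2 := by
  rw [norm_eq_sqrt_integral_norm_sq, Real.sq_sqrt (integral_nonneg fun _ => by positivity)]

lemma integrable_norm_sq (f : Lp F 2 μ) : Integrable (fun a => ‖f a‖ ^ 2) μ :=
  (Lp.memLp f).integrable_norm_pow two_ne_zero

lemma integral_one_add_norm_sq [IsProbabilityMeasure μ] (f : Lp F 2 μ) :
    ∫ a, (1 + ‖f a‖ ^ 2) ∂μ = 1 + ‖f‖ ^ 2 := by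
  rw [integral_add (integrable_const 1) (integrable_norm_sq f), integral_norm_sq]
  simp

lemma integrable_norm_mul_norm (f g : Lp F 2 μ) : Integrable (fun a => ‖f a‖ * ‖g a‖) μ :=
  (Lp.memLp f).norm.integrable_mul (Lp.memLp g).norm

lemma integral_norm_mul_norm_le (f g : Lp F 2 μ) : ∫ a, ‖f a‖ * ‖g a‖ ∂μ ≤ ‖f‖ * ‖g‖ := by
  have h := integral_mul_norm_le_Lp_mul_Lq Real.HolderConjugate.two_two
    (f := f) (g := g) (μ := μ) (by simpa using Lp.memLp f) (by simpa using Lp.memLp g)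
  simpa [norm_eq_sqrt_integral_norm_sq, Real.sqrt_eq_rpow] using h

lemma integral_norm_le_norm [IsProbabilityMeasure μ] (f : Lp F 2 μ) : ∫ a, ‖f a‖ ∂μ ≤ ‖f‖ := by
  rw [← lpNorm_one_eq_integral_norm (Lp.aestronglyMeasurable f), norm_def,
    ← toReal_eLpNorm (Lp.aestronglyMeasurable f)]
  exact ENNReal.toReal_mono (Lp.eLpNorm_ne_top f)
    (eLpNorm_le_eLpNorm_of_exponent_le one_le_two (Lp.aestronglyMeasurable f))

end MeasureTheory.Lp

theorem norm_sub_le_of_partial_fderiv_le {E V F : Type*} [NormedAddCommGroup E]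
    [NormedSpace ℝ E] [NormedAddCommGroup V] [NormedSpace ℝ V] [NormedAddCommGroup F]
    [NormedSpace ℝ F] {G : E → V → F} {gq : E → E →L[ℝ] F} {gv : V → V →L[ℝ] F} {s : Set E}
    {q q' : E} {v v' : V} {A B R : ℝ}
    (hs : Convex ℝ s) (hq : q ∈ s) (hq' : q' ∈ s) (hv : ‖v‖ ≤ R) (hv' : ‖v'‖ ≤ R)
    (hGq : ∀ z ∈ s, HasFDerivAt (G · v) (gq z) z) (hgq : ∀ z ∈ s, ‖gq z‖ ≤ A)
    (hGv : ∀ z, ‖z‖ ≤ R → HasFDerivAt (G q') (gv z) z) (hgv : ∀ z, ‖z‖ ≤ R → ‖gv z‖ ≤ B) :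
    ‖G q v - G q' v'‖ ≤ A * ‖q - q'‖ + B * ‖v - v'‖ := by
  have hball : ∀ z ∈ Metric.closedBall (0 : V) R, ‖z‖ ≤ R := fun z => mem_closedBall_zero_iff.mp
  calc ‖G q v - G q' v'‖ ≤ ‖G q v - G q' v‖ + ‖G q' v - G q' v'‖ :=
        norm_sub_le_norm_sub_add_norm_sub _ _ _
    _ ≤ A * ‖q - q'‖ + B * ‖v - v'‖ := add_le_add
        (hs.norm_image_sub_le_of_norm_hasFDerivWithin_le
          (fun z hz => (hGq z hz).hasFDerivWithinAt) hgq hq' hq)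
        ((convex_closedBall 0 R).norm_image_sub_le_of_norm_hasFDerivWithin_le
          (fun z hz => (hGv z (hball z hz)).hasFDerivWithinAt) (fun z hz => hgv z (hball z hz))
          (mem_closedBall_zero_iff.mpr hv') (mem_closedBall_zero_iff.mpr hv))

lemma norm_pathH_le {n : ℕ} (c : Hsp n) (t : ℝ) : ‖pathH c t‖ ≤ 2 * ‖c‖ := by
  have hc2 : Integrable (c.2 : ℝ → E n) μ01 := (Lp.memLp c.2).integrable one_le_two
  calc ‖pathH c t‖ ≤ ‖c.1‖ + ∫ s, ‖c.2 s‖ ∂μ01 := by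
        refine (norm_add_le _ _).trans (add_le_add_right ?_ _)
        exact (norm_integral_le_integral_norm _).trans
          (setIntegral_le_integral hc2.norm (Eventually.of_forall fun _ => norm_nonneg _))
    _ ≤ ‖c.1‖ + ‖c.2‖ := add_le_add_right (Lp.integral_norm_le_norm c.2) _
    _ ≤ 2 * ‖c‖ := by linarith [norm_fst_le c, norm_snd_le c]

lemma norm_pathH_sub_pathH_le {n : ℕ} (a b : Hsp n) {t : ℝ} (ht : t ∈ Icc (0:ℝ) 1) :
    ‖pathH a t - pathH b t‖ ≤ 2 * ‖a - b‖ := by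
  have h := pathH_add (a - b) b t ht
  rw [sub_add_cancel] at h
  rw [h, add_sub_cancel_right]
  exact norm_pathH_le (a - b) t

lemma continuousOn_pathH {n : ℕ} (p : Hsp n) : ContinuousOn (pathH p) (Icc 0 1) := by
  have hg : Integrable (p.2 : ℝ → E n) μ01 := (Lp.memLp p.2).integrable one_le_two
  have hprim : Continuous fun t => p.1 + ∫ s in (0:ℝ)..t, p.2 s ∂μ01 :=
    continuous_const.add (hg.continuous_primitive 0)
  refine hprim.continuousOn.congr fun t ht => ?_
  simp only [pathH, intervalIntegral.integral_of_le ht.1]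

lemma exists_ball_subset_of_mem_actO {n : ℕ} {U : Set (E n)} (hU : IsOpen U) {p : Hsp n}
    (hp : p ∈ actO U) : ∃ ε > 0, ∀ t ∈ Icc (0:ℝ) 1, Metric.ball (pathH p t) ε ⊆ U := by
  obtain ⟨ε, hε, hsub⟩ := (isCompact_Icc.image_of_continuousOn (continuousOn_pathH p))
    |>.exists_thickening_subset_open hU (image_subset_iff.mpr hp)
  exact ⟨ε, hε, fun t ht => (Metric.ball_subset_thickening (mem_image_of_mem _ ht) ε).trans hsub⟩

-- Condition (L1'), for times in `[0,1]`.
def HessianBounds {n : ℕ} (U : Set (E n)) (ℓ₁ : ℝ)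
    (Lvv Lqv Lvq Lqq : ℝ → E n → E n → (E n →L[ℝ] E n)) : Prop :=
  ∀ t ∈ Icc (0:ℝ) 1, ∀ q ∈ U, ∀ v : E n,
    ‖Lvv t q v‖ ≤ ℓ₁ ∧ ‖Lqv t q v‖ ≤ ℓ₁ * (1 + ‖v‖) ∧ ‖Lvq t q v‖ ≤ ℓ₁ * (1 + ‖v‖)
      ∧ ‖Lqq t q v‖ ≤ ℓ₁ * (1 + ‖v‖ ^ 2)

section Nemitsky

variable {n : ℕ} {U : Set (E n)} {ℓ₁ : ℝ} {Lq Lv : ℝ → E n → E n → E n}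
  {Lvv Lqv Lvq Lqq : ℝ → E n → E n → (E n →L[ℝ] E n)}

lemma norm_Lq_sub_le (hℓ₁ : 0 ≤ ℓ₁)
    (hLvq : ∀ (t : ℝ), ∀ q ∈ U, ∀ v : E n, HasFDerivAt (fun v' => Lq t q v') (Lvq t q v) v)
    (hLqq : ∀ (t : ℝ), ∀ q ∈ U, ∀ v : E n, HasFDerivAt (fun q' => Lq t q' v) (Lqq t q v) q)
    (hL1 : HessianBounds U ℓ₁ Lvv Lqv Lvq Lqq) {t : ℝ} (ht : t ∈ Icc (0:ℝ) 1)
    {s : Set (E n)} (hs : Convex ℝ s) (hsU : s ⊆ U) {q q' : E n} (hq : q ∈ s) (hq' : q' ∈ s)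
    (v v' : E n) :
    ‖Lq t q v - Lq t q' v'‖
      ≤ ℓ₁ * (1 + ‖v‖ ^ 2) * ‖q - q'‖ + ℓ₁ * (1 + ‖v'‖ + ‖v - v'‖) * ‖v - v'‖ :=
  norm_sub_le_of_partial_fderiv_le hs hq hq' (norm_le_insert' v v')
    (le_add_of_nonneg_right (norm_nonneg _))
    (fun z hz => hLqq t z (hsU hz) v) (fun z hz => (hL1 t ht z (hsU hz) v).2.2.2)
    (fun z _ => hLvq t q' (hsU hq') z)
    (fun z hz => (hL1 t ht q' (hsU hq') z).2.2.1.trans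
      (mul_le_mul_of_nonneg_left (by linarith) hℓ₁))

lemma norm_Lv_sub_le
    (hLvv : ∀ (t : ℝ), ∀ q ∈ U, ∀ v : E n, HasFDerivAt (fun v' => Lv t q v') (Lvv t q v) v)
    (hLqv : ∀ (t : ℝ), ∀ q ∈ U, ∀ v : E n, HasFDerivAt (fun q' => Lv t q' v) (Lqv t q v) q)
    (hL1 : HessianBounds U ℓ₁ Lvv Lqv Lvq Lqq) {t : ℝ} (ht : t ∈ Icc (0:ℝ) 1)
    {s : Set (E n)} (hs : Convex ℝ s) (hsU : s ⊆ U) {q q' : E n} (hq : q ∈ s) (hq' : q' ∈ s)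
    (v v' : E n) :
    ‖Lv t q v - Lv t q' v'‖ ≤ ℓ₁ * (1 + ‖v‖) * ‖q - q'‖ + ℓ₁ * ‖v - v'‖ :=
  norm_sub_le_of_partial_fderiv_le hs hq hq' (le_max_left ‖v‖ ‖v'‖) (le_max_right ‖v‖ ‖v'‖)
    (fun z hz => hLqv t z (hsU hz) v) (fun z hz => (hL1 t ht z (hsU hz) v).2.1)
    (fun z _ => hLvv t q' (hsU hq') z) (fun z _ => (hL1 t ht q' (hsU hq') z).1)

lemma pathH_mem_ball {p r : Hsp n} {ε : ℝ} (hr : r ∈ Metric.ball p (ε / 2)) {t : ℝ}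
    (ht : t ∈ Icc (0:ℝ) 1) : pathH r t ∈ Metric.ball (pathH p t) ε := by
  rw [Metric.mem_ball, dist_eq_norm] at hr ⊢
  linarith [norm_pathH_sub_pathH_le r p ht]

lemma integral_norm_Lq_sub_le (hℓ₁ : 0 ≤ ℓ₁)
    (hLvq : ∀ (t : ℝ), ∀ q ∈ U, ∀ v : E n, HasFDerivAt (fun v' => Lq t q v') (Lvq t q v) v)
    (hLqq : ∀ (t : ℝ), ∀ q ∈ U, ∀ v : E n, HasFDerivAt (fun q' => Lq t q' v) (Lqq t q v) q)
    (hL1 : HessianBounds U ℓ₁ Lvv Lqv Lvq Lqq) {p r : Hsp n} {ε : ℝ}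
    (hball : ∀ t ∈ Icc (0:ℝ) 1, Metric.ball (pathH p t) ε ⊆ U) (hr : r ∈ Metric.ball p (ε / 2)) :
    ∫ t, ‖Lq t (pathH r t) (r.2 t) - Lq t (pathH p t) (p.2 t)‖ ∂μ01
      ≤ ℓ₁ * (2 * ‖r - p‖ * (1 + ‖r.2‖ ^ 2)
        + (‖r.2 - p.2‖ + ‖p.2‖ * ‖r.2 - p.2‖ + ‖r.2 - p.2‖ ^ 2)) := by
  have hε : 0 < ε := by linarith [Metric.pos_of_mem_ball hr]
  set u : Lp (E n) 2 μ01 := r.2 - p.2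
  have hbound : ∀ᵐ t ∂μ01, ‖Lq t (pathH r t) (r.2 t) - Lq t (pathH p t) (p.2 t)‖
      ≤ ℓ₁ * (2 * ‖r - p‖ * (1 + ‖r.2 t‖ ^ 2) + (‖u t‖ + ‖p.2 t‖ * ‖u t‖ + ‖u t‖ ^ 2)) := by
    filter_upwards [ae_restrict_mem measurableSet_Icc, Lp.coeFn_sub r.2 p.2] with t ht hu
    rw [hu, Pi.sub_apply]
    calc _ ≤ ℓ₁ * (1 + ‖r.2 t‖ ^ 2) * ‖pathH r t - pathH p t‖
          + ℓ₁ * (1 + ‖p.2 t‖ + ‖r.2 t - p.2 t‖) * ‖r.2 t - p.2 t‖ :=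
          norm_Lq_sub_le hℓ₁ hLvq hLqq hL1 ht (convex_ball _ _) (hball t ht)
            (pathH_mem_ball hr ht) (Metric.mem_ball_self hε) _ _
      _ ≤ ℓ₁ * (1 + ‖r.2 t‖ ^ 2) * (2 * ‖r - p‖)
          + ℓ₁ * (1 + ‖p.2 t‖ + ‖r.2 t - p.2 t‖) * ‖r.2 t - p.2 t‖ := by
          gcongr; exact norm_pathH_sub_pathH_le r p ht
      _ = _ := by ring
  have hX : Integrable (fun t => 2 * ‖r - p‖ * (1 + ‖r.2 t‖ ^ 2)) μ01 :=
    ((integrable_const 1).add (Lp.integrable_norm_sq r.2)).const_mul _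
  have hY : Integrable (fun t => ‖u t‖) μ01 := ((Lp.memLp u).integrable one_le_two).norm
  have hZ := Lp.integrable_norm_mul_norm p.2 u
  have hW := Lp.integrable_norm_sq u
  have hYZ : Integrable (fun t => ‖u t‖ + ‖p.2 t‖ * ‖u t‖) μ01 := hY.add hZ
  have hYZW : Integrable (fun t => ‖u t‖ + ‖p.2 t‖ * ‖u t‖ + ‖u t‖ ^ 2) μ01 := hYZ.add hW
  calc _ ≤ ∫ t, ℓ₁ * (2 * ‖r - p‖ * (1 + ‖r.2 t‖ ^ 2)
          + (‖u t‖ + ‖p.2 t‖ * ‖u t‖ + ‖u t‖ ^ 2)) ∂μ01 :=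
        integral_mono_of_nonneg (ae_of_all _ fun _ => norm_nonneg _)
          ((hX.add hYZW).const_mul ℓ₁) hbound
    _ = ℓ₁ * (2 * ‖r - p‖ * (1 + ‖r.2‖ ^ 2)
          + (∫ t, ‖u t‖ ∂μ01 + ∫ t, ‖p.2 t‖ * ‖u t‖ ∂μ01 + ‖u‖ ^ 2)) := by
        rw [integral_const_mul, integral_add hX hYZW, integral_add hYZ hW,
          integral_add hY hZ, integral_const_mul, Lp.integral_one_add_norm_sq, Lp.integral_norm_sq]
    _ ≤ _ := by
        gcongr
        exacts [Lp.integral_norm_le_norm u, Lp.integral_norm_mul_norm_le p.2 u]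

lemma integral_norm_Lv_sub_sq_le (hℓ₁ : 0 ≤ ℓ₁)
    (hLvv : ∀ (t : ℝ), ∀ q ∈ U, ∀ v : E n, HasFDerivAt (fun v' => Lv t q v') (Lvv t q v) v)
    (hLqv : ∀ (t : ℝ), ∀ q ∈ U, ∀ v : E n, HasFDerivAt (fun q' => Lv t q' v) (Lqv t q v) q)
    (hL1 : HessianBounds U ℓ₁ Lvv Lqv Lvq Lqq) {p r : Hsp n} {ε : ℝ}
    (hball : ∀ t ∈ Icc (0:ℝ) 1, Metric.ball (pathH p t) ε ⊆ U) (hr : r ∈ Metric.ball p (ε / 2)) :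
    ∫ t, ‖Lv t (pathH r t) (r.2 t) - Lv t (pathH p t) (p.2 t)‖ ^ 2 ∂μ01
      ≤ ℓ₁ ^ 2 * (16 * ‖r - p‖ ^ 2 * (1 + ‖r.2‖ ^ 2) + 2 * ‖r.2 - p.2‖ ^ 2) := by
  have hε : 0 < ε := by linarith [Metric.pos_of_mem_ball hr]
  set u : Lp (E n) 2 μ01 := r.2 - p.2
  have hbound : ∀ᵐ t ∂μ01, ‖Lv t (pathH r t) (r.2 t) - Lv t (pathH p t) (p.2 t)‖ ^ 2
      ≤ ℓ₁ ^ 2 * (16 * ‖r - p‖ ^ 2 * (1 + ‖r.2 t‖ ^ 2) + 2 * ‖u t‖ ^ 2) := by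
    filter_upwards [ae_restrict_mem measurableSet_Icc, Lp.coeFn_sub r.2 p.2] with t ht hu
    rw [hu, Pi.sub_apply]
    have hdiff : ‖Lv t (pathH r t) (r.2 t) - Lv t (pathH p t) (p.2 t)‖
        ≤ ℓ₁ * ((1 + ‖r.2 t‖) * (2 * ‖r - p‖) + ‖r.2 t - p.2 t‖) := by
      calc _ ≤ ℓ₁ * (1 + ‖r.2 t‖) * ‖pathH r t - pathH p t‖ + ℓ₁ * ‖r.2 t - p.2 t‖ :=
            norm_Lv_sub_le hLvv hLqv hL1 ht (convex_ball _ _) (hball t ht)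
              (pathH_mem_ball hr ht) (Metric.mem_ball_self hε) _ _
        _ ≤ ℓ₁ * (1 + ‖r.2 t‖) * (2 * ‖r - p‖) + ℓ₁ * ‖r.2 t - p.2 t‖ := by
            gcongr; exact norm_pathH_sub_pathH_le r p ht
        _ = _ := by ring
    calc _ ≤ (ℓ₁ * ((1 + ‖r.2 t‖) * (2 * ‖r - p‖) + ‖r.2 t - p.2 t‖)) ^ 2 := by gcongr
      _ ≤ _ := by
        rw [mul_pow]
        gcongr
        -- `(a + b)² ≤ 2a² + 2b²` and `(1 + s)² ≤ 2(1 + s²)` give the constants 16 and 2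
        nlinarith [sq_nonneg (1 - ‖r.2 t‖), sq_nonneg ‖r - p‖,
          sq_nonneg ((1 + ‖r.2 t‖) * (2 * ‖r - p‖) - ‖r.2 t - p.2 t‖)]
  have hX : Integrable (fun t => 16 * ‖r - p‖ ^ 2 * (1 + ‖r.2 t‖ ^ 2)) μ01 :=
    ((integrable_const 1).add (Lp.integrable_norm_sq r.2)).const_mul _
  have hW := (Lp.integrable_norm_sq u).const_mul 2
  calc _ ≤ ∫ t, ℓ₁ ^ 2 * (16 * ‖r - p‖ ^ 2 * (1 + ‖r.2 t‖ ^ 2) + 2 * ‖u t‖ ^ 2) ∂μ01 :=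
        integral_mono_of_nonneg (ae_of_all _ fun _ => by positivity)
          ((hX.add hW).const_mul _) hbound
    _ = _ := by
        rw [integral_const_mul, integral_add hX hW, integral_const_mul, integral_const_mul,
          Lp.integral_one_add_norm_sq, Lp.integral_norm_sq]

lemma tendsto_integral_norm_Lq_sub (hU : IsOpen U) {p : Hsp n} (hp : p ∈ actO U) (hℓ₁ : 0 ≤ ℓ₁)
    (hLvq : ∀ (t : ℝ), ∀ q ∈ U, ∀ v : E n, HasFDerivAt (fun v' => Lq t q v') (Lvq t q v) v)
    (hLqq : ∀ (t : ℝ), ∀ q ∈ U, ∀ v : E n, HasFDerivAt (fun q' => Lq t q' v) (Lqq t q v) q)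
    (hL1 : HessianBounds U ℓ₁ Lvv Lqv Lvq Lqq) :
    Tendsto (fun r : Hsp n => ∫ t, ‖Lq t (pathH r t) (r.2 t) - Lq t (pathH p t) (p.2 t)‖ ∂μ01)
      (𝓝 p) (𝓝 0) := by
  obtain ⟨ε, hε, hball⟩ := exists_ball_subset_of_mem_actO hU hp
  exact squeeze_zero' (Eventually.of_forall fun r => integral_nonneg fun t => norm_nonneg _)
    (eventually_of_mem (Metric.ball_mem_nhds p (half_pos hε))
      fun r => integral_norm_Lq_sub_le hℓ₁ hLvq hLqq hL1 hball)
    ((by fun_prop : Continuous _).tendsto' p 0 (by simp))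

lemma tendsto_integral_norm_Lv_sub_sq (hU : IsOpen U) {p : Hsp n} (hp : p ∈ actO U)
    (hℓ₁ : 0 ≤ ℓ₁)
    (hLvv : ∀ (t : ℝ), ∀ q ∈ U, ∀ v : E n, HasFDerivAt (fun v' => Lv t q v') (Lvv t q v) v)
    (hLqv : ∀ (t : ℝ), ∀ q ∈ U, ∀ v : E n, HasFDerivAt (fun q' => Lv t q' v) (Lqv t q v) q)
    (hL1 : HessianBounds U ℓ₁ Lvv Lqv Lvq Lqq) :
    Tendsto
      (fun r : Hsp n => ∫ t, ‖Lv t (pathH r t) (r.2 t) - Lv t (pathH p t) (p.2 t)‖ ^ 2 ∂μ01)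
      (𝓝 p) (𝓝 0) := by
  obtain ⟨ε, hε, hball⟩ := exists_ball_subset_of_mem_actO hU hp
  exact squeeze_zero' (Eventually.of_forall fun r => integral_nonneg fun t => by positivity)
    (eventually_of_mem (Metric.ball_mem_nhds p (half_pos hε))
      fun r => integral_norm_Lv_sub_sq_le hℓ₁ hLvv hLqv hL1 hball)
    ((by fun_prop : Continuous _).tendsto' p 0 (by simp))

end Nemitsky

theorem nemitsky_convergence_general
    {n : ℕ} (U : Set (E n)) (hU : IsOpen U)
    (L : ℝ → E n → E n → ℝ)
    (Lq Lv : ℝ → E n → E n → E n)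
    (Lvv Lqv Lvq Lqq : ℝ → E n → E n → (E n →L[ℝ] E n))
    (hLvv : ∀ (t : ℝ), ∀ q ∈ U, ∀ v : E n, HasFDerivAt (fun v' => Lv t q v') (Lvv t q v) v)
    (hLqv : ∀ (t : ℝ), ∀ q ∈ U, ∀ v : E n, HasFDerivAt (fun q' => Lv t q' v) (Lqv t q v) q)
    (hLvq : ∀ (t : ℝ), ∀ q ∈ U, ∀ v : E n, HasFDerivAt (fun v' => Lq t q v') (Lvq t q v) v)
    (hLqq : ∀ (t : ℝ), ∀ q ∈ U, ∀ v : E n, HasFDerivAt (fun q' => Lq t q' v) (Lqq t q v) q)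
    (ℓ₁ : ℝ) (hℓ₁ : 0 < ℓ₁)
    (hL1 : ∀ t ∈ Set.Icc (0:ℝ) 1, ∀ q ∈ U, ∀ v : E n,
      ‖Lvv t q v‖ ≤ ℓ₁ ∧ ‖Lqv t q v‖ ≤ ℓ₁ * (1 + ‖v‖) ∧ ‖Lvq t q v‖ ≤ ℓ₁ * (1 + ‖v‖)
        ∧ ‖Lqq t q v‖ ≤ ℓ₁ * (1 + ‖v‖ ^ 2))
    (ps : ℕ → Hsp n) (p : Hsp n)
    (hp : p ∈ actO U)
    (hconv : Tendsto ps atTop (𝓝 p)) :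
    Tendsto (fun h => ∫ t, ‖Lq t (pathH (ps h) t) ((ps h).2 t) - Lq t (pathH p t) (p.2 t)‖ ∂μ01)
      atTop (𝓝 0) ∧
    Tendsto
      (fun h => ∫ t, ‖Lv t (pathH (ps h) t) ((ps h).2 t) - Lv t (pathH p t) (p.2 t)‖ ^ 2 ∂μ01)
      atTop (𝓝 0) :=
  ⟨(tendsto_integral_norm_Lq_sub hU hp hℓ₁.le hLvq hLqq hL1).comp hconv,
    (tendsto_integral_norm_Lv_sub_sq hU hp hℓ₁.le hLvv hLqv hL1).comp hconv⟩

/-- Convergence of the Nemitsky operators: if `(x_h,w_h) → (x,w)` in `H`, with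
all paths in `U`, then `∂L/∂q(·,γ_h,w_h) → ∂L/∂q(·,γ,w)` in `L¹` and
`∂L/∂v(·,γ_h,w_h) → ∂L/∂v(·,γ,w)` in `L²`. -/
theorem nemitsky_convergence
    {n : ℕ} (U : Set (E n)) (hU : IsOpen U)
    (L : ℝ → E n → E n → ℝ)
    (Lq Lv : ℝ → E n → E n → E n)
    (Lvv Lqv Lvq Lqq : ℝ → E n → E n → (E n →L[ℝ] E n))
    (hL : ContDiffOn ℝ ∞ (fun z : ℝ × E n × E n => L z.1 z.2.1 z.2.2)
      (Set.univ ×ˢ U ×ˢ Set.univ))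
    (hLq : ∀ (t : ℝ), ∀ q ∈ U, ∀ v : E n, HasGradientAt (fun q' => L t q' v) (Lq t q v) q)
    (hLv : ∀ (t : ℝ), ∀ q ∈ U, ∀ v : E n, HasGradientAt (fun v' => L t q v') (Lv t q v) v)
    (hLvv : ∀ (t : ℝ), ∀ q ∈ U, ∀ v : E n, HasFDerivAt (fun v' => Lv t q v') (Lvv t q v) v)
    (hLqv : ∀ (t : ℝ), ∀ q ∈ U, ∀ v : E n, HasFDerivAt (fun q' => Lv t q' v) (Lqv t q v) q)
    (hLvq : ∀ (t : ℝ), ∀ q ∈ U, ∀ v : E n, HasFDerivAt (fun v' => Lq t q v') (Lvq t q v) v)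
    (hLqq : ∀ (t : ℝ), ∀ q ∈ U, ∀ v : E n, HasFDerivAt (fun q' => Lq t q' v) (Lqq t q v) q)
    (ℓ₁ : ℝ) (hℓ₁ : 0 < ℓ₁)
    (hL1 : ∀ t ∈ Set.Icc (0:ℝ) 1, ∀ q ∈ U, ∀ v : E n,
      ‖Lvv t q v‖ ≤ ℓ₁ ∧ ‖Lqv t q v‖ ≤ ℓ₁ * (1 + ‖v‖) ∧ ‖Lvq t q v‖ ≤ ℓ₁ * (1 + ‖v‖)
        ∧ ‖Lqq t q v‖ ≤ ℓ₁ * (1 + ‖v‖ ^ 2))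
    (ps : ℕ → Hsp n) (p : Hsp n)
    (hps : ∀ h, ps h ∈ actO U) (hp : p ∈ actO U)
    (hconv : Tendsto ps atTop (𝓝 p)) :
    Tendsto (fun h => ∫ t, ‖Lq t (pathH (ps h) t) ((ps h).2 t) - Lq t (pathH p t) (p.2 t)‖ ∂μ01)
      atTop (𝓝 0) ∧
    Tendsto
      (fun h => ∫ t, ‖Lv t (pathH (ps h) t) ((ps h).2 t) - Lv t (pathH p t) (p.2 t)‖ ^ 2 ∂μ01)
      atTop (𝓝 0) :=
  nemitsky_convergence_general U hU L Lq Lv Lvv Lqv Lvq Lqq hLvv hLqv hLvq hLqq ℓ₁ hℓ₁ hL1 ps p hp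
    hconv
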